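/- If t ≥ 0, ρ(k) ≥ ρ_c, and kX + t·w ≤ x ≤ kX + t·v_f, then the Lax–Hopf solution associated with the k-th initial value condition satisfies M_{M_k}(t, x) = −Σ_{i=1}^{k} ρ(i)·X + ρ_c·(t·w + kX − x) − ρ_m·t·w. -/
import Mathlib


/-- The triangular fundamental diagram: `ψ(ρ) = v_f·ρ` for `ρ ≤ ρ_c` and
`ψ(ρ) = w·(ρ − ρ_m)` otherwise. -/
noncomputable def fd (vf w ρc ρm : ℝ) (ρ : ℝ) : ℝ :=
  if ρ ≤ ρc then vf * ρ else w * (ρ - ρm)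

/-- The transform `φ*(u) = sup_{p ∈ [0, ρ_m]} (p·u + ψ(p))`. -/
noncomputable def phiStar (vf w ρc ρm : ℝ) (u : ℝ) : ℝ :=
  sSup ((fun p => p * u + fd vf w ρc ρm p) '' Set.Icc 0 ρm)

/-- The Lax–Hopf solution associated with a value condition `c : ℝ × ℝ → ℝ ∪ {+∞}`
(modeled with values in `EReal`):
`M_c(t, x) = inf { c(t − T, x + T·u) + T·φ*(u) : T ≥ 0, u ∈ [−v_f, −w] }`. -/
noncomputable def laxHopf (vf w ρc ρm : ℝ) (c : ℝ × ℝ → EReal) (t x : ℝ) : EReal :=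
  ⨅ (T : ℝ) (_ : 0 ≤ T) (u : ℝ) (_ : u ∈ Set.Icc (-vf) (-w)),
    c (t - T, x + T * u) + ((T * phiStar vf w ρc ρm u : ℝ) : EReal)

/-- The `k`-th initial value condition: for `x ∈ [(k−1)X, kX]`,
`M_k(0, x) = −Σ_{i=1}^{k−1} ρ(i)·X − ρ(k)·(x − (k−1)X)`, and `+∞` elsewhere. -/
noncomputable def initCond (X : ℝ) (ρ : ℕ → ℝ) (k : ℕ) : ℝ × ℝ → EReal := fun p =>
  if p.1 = 0 ∧ ((k : ℝ) - 1) * X ≤ p.2 ∧ p.2 ≤ (k : ℝ) * X then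
    (((-(∑ i ∈ Finset.Icc 1 (k - 1), ρ i * X) - ρ k * (p.2 - ((k : ℝ) - 1) * X)) : ℝ) : EReal)
  else ⊤

lemma phiStar_eq (vf ρc ρm w : ℝ) (hρc : 0 < ρc) (hρcm : ρc < ρm)
    (hwprod : w * (ρc - ρm) = vf * ρc)
    (u : ℝ) (hu1 : -vf ≤ u) (hu2 : u ≤ -w) :
    phiStar vf w ρc ρm u = ρc * u + vf * ρc := by
  have hg : IsGreatest ((fun p => p * u + fd vf w ρc ρm p) '' Set.Icc 0 ρm) (ρc * u + vf * ρc) := by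
    constructor
    · exact ⟨ρc, ⟨hρc.le, hρcm.le⟩, by simp [fd, mul_comm]⟩
    · rintro y ⟨p, ⟨hp0, hpm⟩, rfl⟩
      simp only [fd]
      split_ifs with h
      · nlinarith [mul_nonneg (sub_nonneg.2 h) (by linarith : (0:ℝ) ≤ u + vf)]
      · push_neg at h
        nlinarith [mul_nonneg (by linarith : (0:ℝ) ≤ p - ρc) (by linarith : (0:ℝ) ≤ -w - u)]
  exact hg.csSup_eq

/-- If `t ≥ 0`, `ρ(k) ≥ ρ_c`, and `kX + t·w ≤ x ≤ kX + t·v_f`, then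
`M_{M_k}(t, x) = −Σ_{i=1}^{k} ρ(i)·X + ρ_c·(t·w + kX − x) − ρ_m·t·w`. -/
theorem laxHopf_initCond_congested_fan (vf ρc ρm w X : ℝ) (hvf : 0 < vf) (hρc : 0 < ρc)
    (hρcm : ρc < ρm) (hw : w = vf * ρc / (ρc - ρm)) (hX : 0 < X)
    (kmax : ℕ) (hkmax : 1 ≤ kmax) (ρ : ℕ → ℝ)
    (hρ : ∀ i : ℕ, 1 ≤ i → i ≤ kmax → ρ i ∈ Set.Icc 0 ρm)
    (k : ℕ) (hk1 : 1 ≤ k) (hk2 : k ≤ kmax) (t x : ℝ) (ht : 0 ≤ t)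
    (hρk : ρc ≤ ρ k)
    (hx1 : (k : ℝ) * X + t * w ≤ x) (hx2 : x ≤ (k : ℝ) * X + t * vf) :
    laxHopf vf w ρc ρm (initCond X ρ k) t x =
      (((-(∑ i ∈ Finset.Icc 1 k, ρ i * X)
          + ρc * (t * w + (k : ℝ) * X - x) - ρm * t * w) : ℝ) : EReal) := by
  have hwprod : w * (ρc - ρm) = vf * ρc := by
    rw [hw]; exact div_mul_cancel₀ _ (sub_ne_zero.2 hρcm.ne)
  have hwneg : w < 0 := by nlinarith
  have hsum : ∑ i ∈ Finset.Icc 1 k, ρ i * X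
      = (∑ i ∈ Finset.Icc 1 (k - 1), ρ i * X) + ρ k * X := by
    obtain ⟨m, rfl⟩ : ∃ m, k = m + 1 := ⟨k - 1, (Nat.succ_pred_eq_of_pos hk1).symm⟩
    rw [Finset.sum_Icc_succ_top (by omega)]
    simp
  apply le_antisymm
  · -- upper bound
    set u₀ : ℝ := if t = 0 then -w else ((k : ℝ) * X - x) / t with hu₀def
    have htu : t * u₀ = (k : ℝ) * X - x := by
      by_cases h : t = 0
      · have hx : x = (k : ℝ) * X := by
          subst h; simp at hx1 hx2; linarith
        simp [hu₀def, h, hx]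
      · simp only [hu₀def, if_neg h]
        field_simp
    have hmem : u₀ ∈ Set.Icc (-vf) (-w) := by
      by_cases h : t = 0
      · simp only [hu₀def, if_pos h, Set.mem_Icc]
        constructor <;> linarith
      · have ht' : 0 < t := lt_of_le_of_ne ht (Ne.symm h)
        simp only [hu₀def, if_neg h, Set.mem_Icc]
        constructor
        · rw [le_div_iff₀ ht']; linarith
        · rw [div_le_iff₀ ht']; linarith
    have hub : laxHopf vf w ρc ρm (initCond X ρ k) t x ≤
        initCond X ρ k (t - t, x + t * u₀) + ((t * phiStar vf w ρc ρm u₀ : ℝ) : EReal) := by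
      unfold laxHopf
      exact iInf_le_of_le t (iInf_le_of_le ht (iInf_le_of_le u₀ (iInf_le_of_le hmem le_rfl)))
    refine hub.trans_eq ?_
    have hxk : x + t * u₀ = (k : ℝ) * X := by linarith
    have hcval : initCond X ρ k (t - t, x + t * u₀) =
        (((-(∑ i ∈ Finset.Icc 1 (k - 1), ρ i * X) - ρ k * X) : ℝ) : EReal) := by
      have h2 : ((t - t, x + t * u₀) : ℝ × ℝ).2 = (k : ℝ) * X := hxk
      rw [initCond, if_pos ⟨by simp, by rw [h2]; nlinarith, le_of_eq h2⟩, h2,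
        EReal.coe_eq_coe_iff]
      ring
    rw [hcval, phiStar_eq vf ρc ρm w hρc hρcm hwprod u₀ hmem.1 hmem.2, ← EReal.coe_add,
      EReal.coe_eq_coe_iff]
    rw [hsum]
    linear_combination ρc * htu - t * hwprod
  · -- lower bound
    refine le_iInf fun T => le_iInf fun hT => le_iInf fun u => le_iInf fun hu => ?_
    rw [initCond]
    split_ifs with hc
    · obtain ⟨hT0, hl, hr⟩ := hc
      have hTt : T = t := by
        have := sub_eq_zero.1 hT0; linarith
      subst hTt
      rw [phiStar_eq vf ρc ρm w hρc hρcm hwprod u hu.1 hu.2, ← EReal.coe_add,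
        EReal.coe_le_coe_iff]
      have hr' : x + T * u ≤ (k : ℝ) * X := hr
      simp only [Prod.snd] at *
      rw [hsum]
      nlinarith [mul_nonneg (sub_nonneg.2 hρk)
        (by linarith : (0:ℝ) ≤ (k : ℝ) * X - (x + T * u))]
    · rw [EReal.top_add_coe]; exact le_top
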